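/- Let ρ ∈ (0,1) and let U, V, E be independent exponential random variables with rate 1. Set r = ((1+ρ)² U + (1−ρ)² V) / ((1+ρ) U + (1−ρ) V) and X = r·E. Then for every x > 0, the density of X at x equals ((1−ρ²)/(2ρ)) ∫_{1−ρ}^{1+ρ} e^{−x/y} / (y (2−y)²) dy. -/

import Mathlib

/-!
Given `r = y`, the product `y * E` is exponential with mean `y`, so `X = r * E` has the
exponential-mixture density `x ↦ ∫ e^{-x/y} / y dF_r(y)`. The law of `r` comes from its
distribution function: writing `a = 1 + ρ`, `b = 1 - ρ`, for `b < x < a` one has `r ≤ x` iff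
`a (a - x) U ≤ b (x - b) V`, and `P(α U ≤ β V) = β / (α + β)` for independent unit exponentials.
This gives `F_r(x) = b (x - b) / ((a - b) (a + b - x))`, with derivative
`a b / ((a - b) (a + b - x)²)` on `(b, a)`.
-/

open MeasureTheory ProbabilityTheory

noncomputable section

/-- Law of an exponential random variable with rate 1: density `e^{-x}` on `(0,∞)`. -/
def expMeasure : Measure ℝ :=
  volume.withDensity (Set.indicator (Set.Ioi 0) fun x => ENNReal.ofReal (Real.exp (-x)))

open Set Real
open scoped ENNReal

namespace MeasureTheory.Measure

variable {α β γ δ : Type*} [MeasurableSpace α] [MeasurableSpace β] [MeasurableSpace γ]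
  [MeasurableSpace δ]

theorem map_prodMap_prodAssoc_symm (μ₁ : Measure α) (μ₂ : Measure β) (μ₃ : Measure γ)
    [SFinite μ₁] [SFinite μ₂] [SFinite μ₃] {g : α × β → δ} (hg : Measurable g) :
    (μ₁.prod (μ₂.prod μ₃)).map (Prod.map g id ∘ MeasurableEquiv.prodAssoc.symm)
      = ((μ₁.prod μ₂).map g).prod μ₃ := by
  rw [← map_map (hg.prodMap measurable_id) MeasurableEquiv.prodAssoc.symm.measurable,
    (measurePreserving_prodAssoc μ₁ μ₂ μ₃).symm.map_eq, ← map_prod_map _ _ hg measurable_id,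
    map_id]

end MeasureTheory.Measure

theorem Real.map_const_mul_withDensity {c : ℝ} (hc : c ≠ 0) {f : ℝ → ℝ≥0∞} (hf : Measurable f) :
    (volume.withDensity f).map (c * ·)
      = volume.withDensity fun x => ENNReal.ofReal |c⁻¹| * f (c⁻¹ * x) := by
  ext s hs
  have hmul : Measurable (c * · : ℝ → ℝ) := measurable_const_mul c
  rw [Measure.map_apply hmul hs, withDensity_apply _ (hmul hs), withDensity_apply _ hs,
    lintegral_const_mul' _ _ ENNReal.ofReal_ne_top, ← smul_eq_mul, ← lintegral_smul_measure,
    ← Measure.restrict_smul, ← Real.map_volume_mul_left hc,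
    setLIntegral_map (f := fun x => f (c⁻¹ * x)) hs (by fun_prop) hmul]
  simp only [inv_mul_cancel_left₀ hc]

theorem expMeasure_apply {s : Set ℝ} (hs : MeasurableSet s) :
    expMeasure s = ∫⁻ x in s ∩ Ioi 0, ENNReal.ofReal (exp (-x)) := by
  rw [_root_.expMeasure, withDensity_apply _ hs, lintegral_indicator measurableSet_Ioi,
    Measure.restrict_restrict measurableSet_Ioi, inter_comm]

theorem lintegral_expMeasure {F : ℝ → ℝ≥0∞} (hF : Measurable F) :
    ∫⁻ u, F u ∂expMeasure = ∫⁻ u in Ioi 0, ENNReal.ofReal (exp (-u)) * F u := by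
  rw [_root_.expMeasure, lintegral_withDensity_eq_lintegral_mul _
    (Measurable.indicator (by fun_prop) measurableSet_Ioi) hF,
    ← lintegral_indicator measurableSet_Ioi]
  congr 1 with u
  by_cases hu : u ∈ Ioi 0 <;> simp [hu]

theorem lintegral_exp_neg_mul_Ioi {c : ℝ} (hc : 0 < c) (w : ℝ) :
    ∫⁻ x in Ioi w, ENNReal.ofReal (exp (-(c * x))) = ENNReal.ofReal (exp (-(c * w)) / c) := by
  have hint : IntegrableOn (fun x => exp (-(c * x))) (Ioi w) := by
    simpa only [neg_mul] using exp_neg_integrableOn_Ioi w hc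
  rw [← ofReal_integral_eq_lintegral_ofReal hint (ae_of_all _ fun x => (exp_pos _).le),
    integral_comp_mul_left_Ioi (fun t => exp (-t)) w hc, integral_exp_neg_Ioi, smul_eq_mul,
    inv_mul_eq_div]

theorem expMeasure_Ici {w : ℝ} (hw : 0 < w) : expMeasure (Ici w) = ENNReal.ofReal (exp (-w)) := by
  rw [expMeasure_apply measurableSet_Ici, inter_eq_left.2 (Ici_subset_Ioi.2 hw),
    ← Measure.restrict_congr_set Ioi_ae_eq_Ici]
  simpa using lintegral_exp_neg_mul_Ioi one_pos w

instance : IsProbabilityMeasure _root_.expMeasure where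
  measure_univ := by
    rw [expMeasure_apply MeasurableSet.univ, univ_inter]
    simpa using lintegral_exp_neg_mul_Ioi one_pos 0

theorem ae_pos_expMeasure : ∀ᵐ x ∂_root_.expMeasure, 0 < x := by
  change _root_.expMeasure (Ioi 0)ᶜ = 0
  rw [expMeasure_apply measurableSet_Ioi.compl, compl_inter_self, Measure.restrict_empty,
    lintegral_zero_measure]

theorem map_const_mul_expMeasure {c : ℝ} (hc : 0 < c) :
    expMeasure.map (c * ·)
      = volume.withDensity ((Ioi 0).indicator fun x => ENNReal.ofReal (exp (-x / c) / c)) := by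
  rw [_root_.expMeasure, Real.map_const_mul_withDensity hc.ne'
    (Measurable.indicator (by fun_prop) measurableSet_Ioi)]
  congr 1 with x
  by_cases hx : x ∈ Ioi 0
  · have hcx : c⁻¹ * x ∈ Ioi 0 := mul_pos (inv_pos.2 hc) hx
    rw [indicator_of_mem hcx, indicator_of_mem hx,
      ← ENNReal.ofReal_mul (abs_nonneg _), abs_of_pos (inv_pos.2 hc)]
    congr 1
    field_simp
  · have hcx : c⁻¹ * x ∉ Ioi 0 := by simpa [mem_Ioi, hc] using hx
    rw [indicator_of_notMem hcx, indicator_of_notMem hx, mul_zero]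

theorem ae_pos_prod_expMeasure :
    ∀ᵐ p ∂(_root_.expMeasure.prod _root_.expMeasure), 0 < p.1 ∧ 0 < p.2 :=
  (Measure.quasiMeasurePreserving_fst.ae ae_pos_expMeasure).and
    (Measure.quasiMeasurePreserving_snd.ae ae_pos_expMeasure)

theorem expMeasure_prod_setOf_mul_le_mul {α β : ℝ} (hα : 0 < α) (hβ : 0 < β) :
    (expMeasure.prod expMeasure) {p : ℝ × ℝ | α * p.1 ≤ β * p.2}
      = ENNReal.ofReal (β / (α + β)) := by
  have hS : MeasurableSet {p : ℝ × ℝ | α * p.1 ≤ β * p.2} :=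
    measurableSet_le (by fun_prop) (by fun_prop)
  rw [Measure.prod_apply hS, lintegral_expMeasure (measurable_measure_prodMk_left hS)]
  calc ∫⁻ u in Ioi 0, ENNReal.ofReal (exp (-u))
        * _root_.expMeasure (Prod.mk u ⁻¹' {p : ℝ × ℝ | α * p.1 ≤ β * p.2})
      = ∫⁻ u in Ioi 0, ENNReal.ofReal (exp (-((1 + α / β) * u))) := by
        refine setLIntegral_congr_fun measurableSet_Ioi fun u (hu : 0 < u) => ?_
        have hsec : Prod.mk u ⁻¹' {p : ℝ × ℝ | α * p.1 ≤ β * p.2} = Ici (α / β * u) := by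
          ext v
          simp only [mem_preimage, mem_ofPred_eq, mem_Ici, div_mul_eq_mul_div, div_le_iff₀ hβ,
            mul_comm v]
        rw [hsec, expMeasure_Ici (by positivity), ← ENNReal.ofReal_mul (exp_pos _).le,
          ← exp_add]
        ring_nf
    _ = ENNReal.ofReal (β / (α + β)) := by
        rw [lintegral_exp_neg_mul_Ioi (by positivity), mul_zero, neg_zero, exp_zero]
        congr 1
        field_simp
        ring

/-- With `a = 1 + ρ` and `b = 1 - ρ`, the eigenvalues of the transmit correlation matrix, this is
the generalized Rayleigh quotient `r` of the paper. -/
def rayleighQuotient (a b : ℝ) (p : ℝ × ℝ) : ℝ :=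
  (a ^ 2 * p.1 + b ^ 2 * p.2) / (a * p.1 + b * p.2)

def rayleighQuotientPDFReal (a b y : ℝ) : ℝ :=
  a * b / ((a - b) * (a + b - y) ^ 2)

def rayleighQuotientPDF (a b : ℝ) : ℝ → ℝ≥0∞ :=
  (Ioo b a).indicator fun y => ENNReal.ofReal (rayleighQuotientPDFReal a b y)

@[fun_prop]
theorem measurable_rayleighQuotient (a b : ℝ) : Measurable (rayleighQuotient a b) := by
  unfold rayleighQuotient
  fun_prop

section RayleighQuotient

variable {a b : ℝ}

theorem rayleighQuotient_le_iff (ha : 0 < a) (hb : 0 < b) {p : ℝ × ℝ} (hu : 0 < p.1)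
    (hv : 0 < p.2) (x : ℝ) :
    rayleighQuotient a b p ≤ x ↔ a * (a - x) * p.1 ≤ b * (x - b) * p.2 := by
  rw [rayleighQuotient, div_le_iff₀ (by positivity)]
  constructor <;> intro h <;> linarith

theorem rayleighQuotient_mem_Ioo (hb : 0 < b) (hab : b < a) {p : ℝ × ℝ} (hu : 0 < p.1)
    (hv : 0 < p.2) : rayleighQuotient a b p ∈ Ioo b a := by
  have ha : 0 < a := hb.trans hab
  rw [rayleighQuotient, mem_Ioo, lt_div_iff₀ (by positivity), div_lt_iff₀ (by positivity)]
  constructor <;> nlinarith [mul_pos (mul_pos ha hu) (sub_pos.2 hab),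
    mul_pos (mul_pos hb hv) (sub_pos.2 hab)]

theorem map_rayleighQuotient_Iic (hb : 0 < b) (hab : b < a) (x : ℝ) :
    (expMeasure.prod expMeasure).map (rayleighQuotient a b) (Iic x)
      = ENNReal.ofReal (b * (min x a - b) / ((a - b) * (a + b - min x a))) := by
  have ha : 0 < a := hb.trans hab
  rw [Measure.map_apply (measurable_rayleighQuotient a b) measurableSet_Iic]
  rcases le_or_gt x b with hxb | hbx
  · rw [min_eq_left (hxb.trans hab.le), ENNReal.ofReal_of_nonpos (div_nonpos_of_nonpos_of_nonneg
      (mul_nonpos_of_nonneg_of_nonpos hb.le (by linarith)) (by nlinarith)),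
      measure_eq_zero_iff_ae_notMem]
    filter_upwards [ae_pos_prod_expMeasure] with p ⟨hu, hv⟩ hle
    exact (rayleighQuotient_mem_Ioo hb hab hu hv).1.not_ge (hle.trans hxb)
  rcases lt_or_ge x a with hxa | hax
  · have hset : rayleighQuotient a b ⁻¹' Iic x
        =ᵐ[expMeasure.prod expMeasure] {p : ℝ × ℝ | a * (a - x) * p.1 ≤ b * (x - b) * p.2} := by
      filter_upwards [ae_pos_prod_expMeasure] with p ⟨hu, hv⟩
      exact propext (rayleighQuotient_le_iff ha hb hu hv x)
    have hα : 0 < a * (a - x) := mul_pos ha (sub_pos.2 hxa)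
    have hβ : 0 < b * (x - b) := mul_pos hb (sub_pos.2 hbx)
    have hden : 0 < (a - b) * (a + b - x) := mul_pos (sub_pos.2 hab) (by linarith)
    rw [min_eq_left hxa.le, measure_congr hset, expMeasure_prod_setOf_mul_le_mul hα hβ]
    congr 1
    rw [div_eq_div_iff (by positivity) hden.ne']
    ring
  · have hset : rayleighQuotient a b ⁻¹' Iic x =ᵐ[expMeasure.prod expMeasure] univ := by
      rw [Filter.eventuallyEq_univ]
      filter_upwards [ae_pos_prod_expMeasure] with p ⟨hu, hv⟩
      exact (rayleighQuotient_mem_Ioo hb hab hu hv).2.le.trans hax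
    rw [min_eq_right hax, measure_congr hset, measure_univ, add_sub_cancel_left,
      mul_comm, div_self (mul_pos (sub_pos.2 hab) hb).ne', ENNReal.ofReal_one]

end RayleighQuotient

section RayleighQuotientPDF

variable {a b : ℝ}

theorem rayleighQuotientPDFReal_nonneg (hb : 0 < b) (hab : b < a) (y : ℝ) :
    0 ≤ rayleighQuotientPDFReal a b y :=
  div_nonneg (mul_pos (hb.trans hab) hb).le (mul_nonneg (sub_pos.2 hab).le (sq_nonneg _))

theorem integral_rayleighQuotientPDFReal (hb : 0 < b) (hab : b < a) {x : ℝ} (hx : x < a + b) :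
    ∫ y in b..x, rayleighQuotientPDFReal a b y = b * (x - b) / ((a - b) * (a + b - x)) := by
  have hlt : ∀ y ∈ uIcc b x, 0 < a + b - y := fun y hy => by
    linarith [hy.2, max_lt (by linarith : b < a + b) hx]
  have hderiv : ∀ y ∈ uIcc b x, HasDerivAt (fun y => a * b / ((a - b) * (a + b - y)))
      (rayleighQuotientPDFReal a b y) y := fun y hy => by
    have hF : (fun z => a * b / ((a - b) * (a + b - z)))
        = fun z => a * b / (a - b) * (a + b - z)⁻¹ := by
      funext z
      simp only [div_eq_mul_inv, mul_inv]
      ring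
    rw [hF]
    exact ((((hasDerivAt_id' y).const_sub (a + b)).fun_inv (hlt y hy).ne').const_mul
      (a * b / (a - b))).congr_deriv (by
        simp only [rayleighQuotientPDFReal, div_eq_mul_inv, mul_inv]
        ring)
  have hcont : ContinuousOn (rayleighQuotientPDFReal a b) (uIcc b x) :=
    continuousOn_const.div (by fun_prop) fun y hy =>
      (mul_pos (sub_pos.2 hab) (pow_pos (hlt y hy) 2)).ne'
  rw [intervalIntegral.integral_eq_sub_of_hasDerivAt hderiv hcont.intervalIntegrable]
  have h1 : a + b - x ≠ 0 := by linarith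
  have h2 : a - b ≠ 0 := by linarith
  have h3 : a ≠ 0 := by linarith
  rw [add_sub_cancel_right, div_sub_div _ _ (mul_ne_zero h2 h1) (mul_ne_zero h2 h3),
    div_eq_div_iff (by positivity) (mul_ne_zero h2 h1)]
  ring

theorem lintegral_Ioc_rayleighQuotientPDFReal (hb : 0 < b) (hab : b < a) {x : ℝ} (hbx : b ≤ x)
    (hxa : x ≤ a) :
    ∫⁻ y in Ioc b x, ENNReal.ofReal (rayleighQuotientPDFReal a b y)
      = ENNReal.ofReal (b * (x - b) / ((a - b) * (a + b - x))) := by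
  have hcont : ContinuousOn (rayleighQuotientPDFReal a b) (Icc b x) :=
    continuousOn_const.div (by fun_prop) fun y hy =>
      (mul_pos (sub_pos.2 hab) (pow_pos (by linarith [hy.2] : 0 < a + b - y) 2)).ne'
  rw [← ofReal_integral_eq_lintegral_ofReal (hcont.integrableOn_Icc.mono_set Ioc_subset_Icc_self)
    (ae_of_all _ (rayleighQuotientPDFReal_nonneg hb hab)),
    ← intervalIntegral.integral_of_le hbx, integral_rayleighQuotientPDFReal hb hab (by linarith)]

theorem withDensity_rayleighQuotientPDF_Iic (hb : 0 < b) (hab : b < a) (x : ℝ) :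
    volume.withDensity (rayleighQuotientPDF a b) (Iic x)
      = ENNReal.ofReal (b * (min x a - b) / ((a - b) * (a + b - min x a))) := by
  rw [withDensity_apply _ measurableSet_Iic, rayleighQuotientPDF,
    lintegral_indicator measurableSet_Ioo, Measure.restrict_restrict measurableSet_Ioo]
  rcases le_or_gt x b with hxb | hbx
  · have hempty : Ioo b a ∩ Iic x = ∅ :=
      eq_empty_iff_forall_notMem.2 fun y hy => by
        simp only [mem_inter_iff, mem_Ioo, mem_Iic] at hy
        linarith [hy.1.1, hy.2]
    rw [hempty, Measure.restrict_empty, lintegral_zero_measure, min_eq_left (hxb.trans hab.le),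
      ENNReal.ofReal_of_nonpos (div_nonpos_of_nonpos_of_nonneg
        (mul_nonpos_of_nonneg_of_nonpos hb.le (by linarith)) (by nlinarith))]
  rcases lt_or_ge x a with hxa | hax
  · have hinter : Ioo b a ∩ Iic x = Ioc b x := by
      ext y
      simp only [mem_inter_iff, mem_Ioo, mem_Iic, mem_Ioc]
      grind
    rw [hinter, min_eq_left hxa.le, lintegral_Ioc_rayleighQuotientPDFReal hb hab hbx.le hxa.le]
  · have hsub : Ioo b a ⊆ Iic x :=
      Ioo_subset_Ioc_self.trans (Ioc_subset_Iic_self.trans (Iic_subset_Iic.2 hax))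
    rw [inter_eq_left.2 hsub, Measure.restrict_congr_set Ioo_ae_eq_Ioc, min_eq_right hax,
      lintegral_Ioc_rayleighQuotientPDFReal hb hab hab.le le_rfl]

theorem map_rayleighQuotient_expMeasure_prod (hb : 0 < b) (hab : b < a) :
    (expMeasure.prod expMeasure).map (rayleighQuotient a b)
      = volume.withDensity (rayleighQuotientPDF a b) := by
  have := Measure.isProbabilityMeasure_map (μ := expMeasure.prod expMeasure)
    (measurable_rayleighQuotient a b).aemeasurable
  exact Measure.ext_of_Iic _ _ fun x => by
    rw [map_rayleighQuotient_Iic hb hab, withDensity_rayleighQuotientPDF_Iic hb hab]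

end RayleighQuotientPDF

theorem map_mul_prod_expMeasure {μ : Measure ℝ} [SFinite μ] (hμ : ∀ᵐ y ∂μ, 0 < y) :
    (μ.prod expMeasure).map (fun q => q.1 * q.2)
      = volume.withDensity ((Ioi 0).indicator fun x =>
          ∫⁻ y, ENNReal.ofReal (exp (-x / y) / y) ∂μ) := by
  set k : ℝ → ℝ → ℝ≥0∞ := fun y => (Ioi 0).indicator fun x => ENNReal.ofReal (exp (-x / y) / y)
  have hk : Measurable (Function.uncurry k) := by
    simp only [k, Function.uncurry_def, indicator_apply]
    exact Measurable.ite (measurableSet_Ioi.preimage measurable_snd) (by fun_prop)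
      measurable_const
  have hmul : Measurable fun q : ℝ × ℝ => q.1 * q.2 := by fun_prop
  ext s hs
  rw [Measure.map_apply hmul hs, Measure.prod_apply (hmul hs), withDensity_apply _ hs]
  calc ∫⁻ y, _root_.expMeasure (Prod.mk y ⁻¹' ((fun q : ℝ × ℝ => q.1 * q.2) ⁻¹' s)) ∂μ
      = ∫⁻ y, (∫⁻ x in s, k y x) ∂μ := lintegral_congr_ae <| hμ.mono fun y hy => by
        simp only [k]
        rw [← withDensity_apply _ hs, ← map_const_mul_expMeasure hy,
          Measure.map_apply (measurable_const_mul y) hs]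
        rfl
    _ = ∫⁻ x in s, (∫⁻ y, k y x ∂μ) := lintegral_lintegral_swap hk.aemeasurable
    _ = _ := setLIntegral_congr_fun hs fun x _ => by
        by_cases hx : x ∈ Ioi 0 <;> simp only [k, indicator_of_mem, indicator_of_notMem, hx,
          lintegral_zero, not_false_eq_true]

theorem lintegral_exp_div_withDensity_rayleighQuotientPDF {a b : ℝ} (hb : 0 < b) (hab : b < a)
    (x : ℝ) :
    ∫⁻ y, ENNReal.ofReal (exp (-x / y) / y) ∂(volume.withDensity (rayleighQuotientPDF a b))
      = ENNReal.ofReal (a * b / (a - b) * ∫ y in b..a, exp (-x / y) / (y * (a + b - y) ^ 2)) := by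
  set f : ℝ → ℝ := fun y => a * b / (a - b) * (exp (-x / y) / (y * (a + b - y) ^ 2))
  have hpdf : Measurable (rayleighQuotientPDF a b) :=
    Measurable.indicator (by unfold rayleighQuotientPDFReal; fun_prop) measurableSet_Ioo
  have hmul : ∀ y, (rayleighQuotientPDF a b * fun y => ENNReal.ofReal (exp (-x / y) / y)) y
      = (Ioo b a).indicator (fun y => ENNReal.ofReal (f y)) y := fun y => by
    by_cases hy : y ∈ Ioo b a
    · have hy0 : 0 < y := hb.trans hy.1
      have hy2 : a + b - y ≠ 0 := by linarith [hy.2]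
      rw [Pi.mul_apply, rayleighQuotientPDF, indicator_of_mem hy, indicator_of_mem hy,
        ← ENNReal.ofReal_mul (rayleighQuotientPDFReal_nonneg hb hab y), rayleighQuotientPDFReal]
      congr 1
      simp only [f]
      field_simp
    · rw [Pi.mul_apply, rayleighQuotientPDF, indicator_of_notMem hy, indicator_of_notMem hy,
        zero_mul]
  have hcont : ContinuousOn f (Icc b a) := by
    have hne : ∀ y ∈ Icc b a, y ≠ 0 := fun y hy => (hb.trans_le hy.1).ne'
    refine continuousOn_const.mul (ContinuousOn.div
      (continuousOn_const.div continuousOn_id hne).rexp (by fun_prop) fun y hy => ?_)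
    exact mul_ne_zero (hne y hy) (pow_ne_zero 2 (by linarith [hy.2]))
  have hf : ∀ y ∈ Ioc b a, 0 ≤ f y := fun y hy =>
    mul_nonneg (div_nonneg (mul_pos (hb.trans hab) hb).le (sub_pos.2 hab).le)
      (div_nonneg (exp_pos _).le (mul_nonneg (hb.trans hy.1).le (sq_nonneg _)))
  rw [lintegral_withDensity_eq_lintegral_mul _ hpdf (by fun_prop), lintegral_congr hmul,
    lintegral_indicator measurableSet_Ioo, Measure.restrict_congr_set Ioo_ae_eq_Ioc,
    ← ofReal_integral_eq_lintegral_ofReal (hcont.integrableOn_Icc.mono_set Ioc_subset_Icc_self)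
      ((ae_restrict_iff' measurableSet_Ioc).2 (ae_of_all _ hf)),
    ← intervalIntegral.integral_of_le hab.le, intervalIntegral.integral_const_mul]

theorem ae_mem_Ioo_map_rayleighQuotient {a b : ℝ} (hb : 0 < b) (hab : b < a) :
    ∀ᵐ y ∂(expMeasure.prod expMeasure).map (rayleighQuotient a b), y ∈ Ioo b a :=
  (ae_map_iff (measurable_rayleighQuotient a b).aemeasurable measurableSet_Ioo).2 <|
    ae_pos_prod_expMeasure.mono fun _ hp => rayleighQuotient_mem_Ioo hb hab hp.1 hp.2

theorem stmt_13_general {Ω : Type*} [MeasurableSpace Ω] (P : Measure Ω)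
    (ρ : ℝ) (hρ : ρ ∈ Set.Ioo (0 : ℝ) 1)
    (U V E : Ω → ℝ)
    (hlaw : Measure.map (fun ω => (U ω, V ω, E ω)) P
      = expMeasure.prod (expMeasure.prod expMeasure)) :
    Measure.map
        (fun ω =>
          ((1 + ρ) ^ 2 * U ω + (1 - ρ) ^ 2 * V ω) / ((1 + ρ) * U ω + (1 - ρ) * V ω) * E ω) P
      = volume.withDensity (Set.indicator (Set.Ioi 0) fun x =>
          ENNReal.ofReal ((1 - ρ ^ 2) / (2 * ρ)
            * ∫ y in (1 - ρ)..(1 + ρ), Real.exp (-x / y) / (y * (2 - y) ^ 2))) := by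
  obtain ⟨hρ0, hρ1⟩ := hρ
  have hb : 0 < 1 - ρ := by linarith
  have hab : 1 - ρ < 1 + ρ := by linarith
  have hr := measurable_rayleighQuotient (1 + ρ) (1 - ρ)
  have hUVE : AEMeasurable (fun ω => (U ω, V ω, E ω)) P :=
    aemeasurable_of_map_neZero (by rw [hlaw]; infer_instance)
  have hX : Measurable fun p : ℝ × ℝ × ℝ =>
      rayleighQuotient (1 + ρ) (1 - ρ) (p.1, p.2.1) * p.2.2 := by
    fun_prop
  calc Measure.map _ P
      = (expMeasure.prod (expMeasure.prod expMeasure)).map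
          fun p => rayleighQuotient (1 + ρ) (1 - ρ) (p.1, p.2.1) * p.2.2 := by
        rw [← hlaw, AEMeasurable.map_map_of_aemeasurable hX.aemeasurable hUVE]
        rfl
    _ = (((expMeasure.prod expMeasure).map (rayleighQuotient (1 + ρ) (1 - ρ))).prod
          expMeasure).map (fun q => q.1 * q.2) := by
        rw [← Measure.map_prodMap_prodAssoc_symm _ _ _ hr, Measure.map_map (by fun_prop)
          (by fun_prop)]
        rfl
    _ = _ := by
        rw [map_mul_prod_expMeasure ((ae_mem_Ioo_map_rayleighQuotient hb hab).mono
          fun y hy => hb.trans hy.1), map_rayleighQuotient_expMeasure_prod hb hab]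
        simp_rw [lintegral_exp_div_withDensity_rayleighQuotientPDF hb hab,
          show (1 + ρ) * (1 - ρ) / (1 + ρ - (1 - ρ)) = (1 - ρ ^ 2) / (2 * ρ) by ring,
          show (1 : ℝ) + ρ + (1 - ρ) = 2 by ring]

theorem stmt_13 {Ω : Type*} [MeasurableSpace Ω] (P : Measure Ω) [IsProbabilityMeasure P]
    (ρ : ℝ) (hρ : ρ ∈ Set.Ioo (0 : ℝ) 1)
    (U V E : Ω → ℝ)
    (hlaw : Measure.map (fun ω => (U ω, V ω, E ω)) P
      = expMeasure.prod (expMeasure.prod expMeasure)) :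
    Measure.map
        (fun ω =>
          ((1 + ρ) ^ 2 * U ω + (1 - ρ) ^ 2 * V ω) / ((1 + ρ) * U ω + (1 - ρ) * V ω) * E ω) P
      = volume.withDensity (Set.indicator (Set.Ioi 0) fun x =>
          ENNReal.ofReal ((1 - ρ ^ 2) / (2 * ρ)
            * ∫ y in (1 - ρ)..(1 + ρ), Real.exp (-x / y) / (y * (2 - y) ^ 2))) :=
  stmt_13_general P ρ hρ U V E hlaw

end
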